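/- Let (M,d) be a complete cone metric space over a real Banach space E with a normal cone P with normal constant K, let T, R : M → M be injective and continuous maps, and let S : M → M be a continuous TR-contraction with constant a ∈ [0,1). Then for every x₀ ∈ M there exist y₀, z₀ ∈ M such that the sequence (T(Sⁿx₀)) converges to y₀ and the sequence (R(Sⁿx₀)) converges to z₀ in the cone metric d. -/

import Mathlib

open Filter

/-- `P` is a cone in the real Banach space `E`: nonempty, closed, not `{0}`,
closed under nonnegative linear combinations, and `P ∩ (-P) = {0}`. -/
def IsCone {E : Type*} [NormedAddCommGroup E] [NormedSpace ℝ E] (P : Set E) : Prop :=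
  P.Nonempty ∧ IsClosed P ∧ P ≠ {0} ∧
    (∀ (a b : ℝ), 0 ≤ a → 0 ≤ b → ∀ x ∈ P, ∀ y ∈ P, a • x + b • y ∈ P) ∧
    (∀ x ∈ P, -x ∈ P → x = 0)

/-- The partial order induced by the cone `P`: `x ≤ y` iff `y - x ∈ P`. -/
def ConeLe {E : Type*} [NormedAddCommGroup E] (P : Set E) (x y : E) : Prop :=
  y - x ∈ P

/-- The strict order induced by the cone `P`: `x ≪ y` iff `y - x ∈ interior P`. -/
def ConeLt {E : Type*} [NormedAddCommGroup E] (P : Set E) (x y : E) : Prop :=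
  y - x ∈ interior P

/-- `P` is a normal cone with normal constant `K`:
`K > 0` and `0 ≤ x ≤ y` implies `‖x‖ ≤ K * ‖y‖`. -/
def IsNormalCone {E : Type*} [NormedAddCommGroup E] (P : Set E) (K : ℝ) : Prop :=
  0 < K ∧ ∀ x y : E, ConeLe P 0 x → ConeLe P x y → ‖x‖ ≤ K * ‖y‖

/-- `d` is a cone metric on `M` with respect to the cone `P ⊆ E`. -/
def IsConeMetric {E : Type*} [NormedAddCommGroup E] (P : Set E) {M : Type*}
    (d : M → M → E) : Prop :=
  (∀ x y : M, x ≠ y → ConeLe P 0 (d x y) ∧ d x y ≠ 0) ∧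
  (∀ x y : M, d x y = 0 ↔ x = y) ∧
  (∀ x y : M, d x y = d y x) ∧
  (∀ x y z : M, ConeLe P (d x y) (d x z + d z y))

/-- Convergence of a sequence in a cone metric space:
for every `c` with `0 ≪ c` eventually `d (s n) l ≪ c`. -/
def ConeConverges {E : Type*} [NormedAddCommGroup E] (P : Set E) {M : Type*}
    (d : M → M → E) (s : ℕ → M) (l : M) : Prop :=
  ∀ c : E, ConeLt P 0 c → ∃ n₀ : ℕ, ∀ n ≥ n₀, ConeLt P (d (s n) l) c

/-- Cauchy sequences in a cone metric space. -/
def ConeCauchy {E : Type*} [NormedAddCommGroup E] (P : Set E) {M : Type*}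
    (d : M → M → E) (s : ℕ → M) : Prop :=
  ∀ c : E, ConeLt P 0 c → ∃ n₀ : ℕ, ∀ n ≥ n₀, ∀ m ≥ n₀, ConeLt P (d (s n) (s m)) c

/-- The cone metric space `(M, d)` is complete: every Cauchy sequence converges. -/
def ConeComplete {E : Type*} [NormedAddCommGroup E] (P : Set E) {M : Type*}
    (d : M → M → E) : Prop :=
  ∀ s : ℕ → M, ConeCauchy P d s → ∃ l : M, ConeConverges P d s l

/-- The cone metric space `(M, d)` is sequentially compact:
every sequence has a convergent subsequence. -/
def ConeSeqCompact {E : Type*} [NormedAddCommGroup E] (P : Set E) {M : Type*}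
    (d : M → M → E) : Prop :=
  ∀ s : ℕ → M, ∃ φ : ℕ → ℕ, StrictMono φ ∧ ∃ l : M, ConeConverges P d (fun i => s (φ i)) l

/-- `T : M → M` is continuous for the cone metric `d`: it preserves convergent sequences. -/
def ConeContinuousMap {E : Type*} [NormedAddCommGroup E] (P : Set E) {M : Type*}
    (d : M → M → E) (T : M → M) : Prop :=
  ∀ (s : ℕ → M) (l : M), ConeConverges P d s l → ConeConverges P d (fun n => T (s n)) (T l)

/-- `T` is sequentially convergent: if `(T yₙ)` converges then `(yₙ)` converges. -/
def ConeSeqConvergent {E : Type*} [NormedAddCommGroup E] (P : Set E) {M : Type*}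
    (d : M → M → E) (T : M → M) : Prop :=
  ∀ s : ℕ → M, (∃ l : M, ConeConverges P d (fun n => T (s n)) l) →
    ∃ l : M, ConeConverges P d s l

/-- `T` is subsequentially convergent: if `(T yₙ)` converges then `(yₙ)` has a
convergent subsequence. -/
def ConeSubseqConvergent {E : Type*} [NormedAddCommGroup E] (P : Set E) {M : Type*}
    (d : M → M → E) (T : M → M) : Prop :=
  ∀ s : ℕ → M, (∃ l : M, ConeConverges P d (fun n => T (s n)) l) →
    ∃ φ : ℕ → ℕ, StrictMono φ ∧ ∃ l : M, ConeConverges P d (fun i => s (φ i)) l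

/-!
Write `sₙ = T (Sⁿ x₀)` and `tₙ = R (Sⁿ x₀)`. Iterating the TR-contraction gives
`d(sₙ, tₙ) ≤ aⁿ d(s₀, t₀)` and `d(sₙ₊₁, tₙ) ≤ aⁿ d(s₁, t₀)`, so along the zigzag
`s₀, t₀, s₁, t₁, …` consecutive steps decay geometrically, and by the triangle inequality so do
`d(sₙ, sₙ₊₁)` and `d(tₙ, tₙ₊₁)`. Summing the geometric series in the cone order and applying
normality of `P` bounds `‖d(sₙ, sₘ)‖` by `K aⁿ ‖B‖ / (1 - a) → 0`; hence both sequences are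
Cauchy and completeness supplies the limits.
-/

open Topology Finset

namespace IsCone

variable {E : Type*} [NormedAddCommGroup E] [NormedSpace ℝ E] {P : Set E}

lemma zero_mem (hP : IsCone P) : (0 : E) ∈ P := by
  obtain ⟨x, hx⟩ := hP.1
  simpa using hP.2.2.2.1 0 0 le_rfl le_rfl x hx x hx

lemma add_mem (hP : IsCone P) {x y : E} (hx : x ∈ P) (hy : y ∈ P) : x + y ∈ P := by
  simpa using hP.2.2.2.1 1 1 zero_le_one zero_le_one x hx y hy

lemma smul_mem (hP : IsCone P) {c : ℝ} (hc : 0 ≤ c) {x : E} (hx : x ∈ P) : c • x ∈ P := by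
  simpa using hP.2.2.2.1 c 0 hc le_rfl x hx x hx

lemma le_refl (hP : IsCone P) (x : E) : ConeLe P x x := by
  simpa [ConeLe] using hP.zero_mem

lemma le_trans (hP : IsCone P) {x y z : E} (hxy : ConeLe P x y) (hyz : ConeLe P y z) :
    ConeLe P x z := by
  simpa [ConeLe] using hP.add_mem hyz hxy

lemma add_le_add (hP : IsCone P) {x y x' y' : E} (h : ConeLe P x y) (h' : ConeLe P x' y') :
    ConeLe P (x + x') (y + y') := by
  simpa [ConeLe, add_sub_add_comm] using hP.add_mem h h'

lemma smul_le_smul (hP : IsCone P) {c : ℝ} (hc : 0 ≤ c) {x y : E} (h : ConeLe P x y) :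
    ConeLe P (c • x) (c • y) := by
  simpa [ConeLe, smul_sub] using hP.smul_mem hc h

lemma smul_le_smul_of_le (hP : IsCone P) {c c' : ℝ} (h : c ≤ c') {x : E} (hx : x ∈ P) :
    ConeLe P (c • x) (c' • x) := by
  simpa [ConeLe, sub_smul] using hP.smul_mem (sub_nonneg.2 h) hx

end IsCone

lemma exists_forall_norm_lt_coneLt {E : Type*} [NormedAddCommGroup E] {P : Set E} {c : E}
    (hc : ConeLt P 0 c) : ∃ ε > 0, ∀ x : E, ‖x‖ < ε → ConeLt P x c := by
  obtain ⟨ε, hε, hball⟩ := Metric.isOpen_iff.1 isOpen_interior c (by simpa [ConeLt] using hc)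
  exact ⟨ε, hε, fun x hx => hball (by simpa [dist_eq_norm] using hx)⟩

namespace IsConeMetric

variable {E : Type*} [NormedAddCommGroup E] {P : Set E} {M : Type*} {d : M → M → E}

lemma dist_self (hd : IsConeMetric P d) (x : M) : d x x = 0 := (hd.2.1 x x).2 rfl

lemma symm (hd : IsConeMetric P d) (x y : M) : d x y = d y x := hd.2.2.1 x y

lemma triangle (hd : IsConeMetric P d) (x y z : M) : ConeLe P (d x y) (d x z + d z y) :=
  hd.2.2.2 x y z

lemma dist_mem [NormedSpace ℝ E] (hd : IsConeMetric P d) (hP : IsCone P) (x y : M) :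
    d x y ∈ P := by
  by_cases h : x = y
  · simpa [h, hd.dist_self] using hP.zero_mem
  · simpa [ConeLe] using (hd.1 x y h).1

lemma coneCauchy_of_norm_dist_le (hd : IsConeMetric P d) {u : ℕ → M} {b : ℕ → ℝ}
    (hb : Tendsto b atTop (𝓝 0)) (hub : ∀ n m, n ≤ m → ‖d (u n) (u m)‖ ≤ b n) :
    ConeCauchy P d u := by
  intro c hc
  obtain ⟨ε, hε, hlt⟩ := exists_forall_norm_lt_coneLt hc
  obtain ⟨n₀, hn₀⟩ := eventually_atTop.1 (hb.eventually (gt_mem_nhds hε))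
  refine ⟨n₀, fun n hn m hm => hlt _ ?_⟩
  rcases le_total n m with h | h
  · exact (hub n m h).trans_lt (hn₀ n hn)
  · rw [hd.symm]
    exact (hub m n h).trans_lt (hn₀ m hm)

variable [NormedSpace ℝ E]

lemma dist_le_geom_sum (hd : IsConeMetric P d) (hP : IsCone P) {a : ℝ} {B : E} {u : ℕ → M}
    (hu : ∀ n, ConeLe P (d (u n) (u (n + 1))) (a ^ n • B)) {n m : ℕ} (hnm : n ≤ m) :
    ConeLe P (d (u n) (u m)) ((∑ k ∈ Ico n m, a ^ k) • B) := by
  induction m, hnm using Nat.le_induction with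
  | base => simpa [hd.dist_self] using hP.le_refl 0
  | succ m hnm ih =>
    rw [sum_Ico_succ_top hnm, add_smul]
    exact hP.le_trans (hd.triangle _ _ (u m)) (hP.add_le_add ih (hu m))

lemma coneCauchy_of_dist_succ_le_geom (hd : IsConeMetric P d) (hP : IsCone P) {K : ℝ}
    (hK : IsNormalCone P K) {a : ℝ} (ha0 : 0 ≤ a) (ha1 : a < 1) {B : E} (hB : B ∈ P)
    {u : ℕ → M} (hu : ∀ n, ConeLe P (d (u n) (u (n + 1))) (a ^ n • B)) :
    ConeCauchy P d u := by
  have h1a : 0 < 1 - a := sub_pos.2 ha1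
  refine hd.coneCauchy_of_norm_dist_le (b := fun n => K * (a ^ n / (1 - a) * ‖B‖)) ?_ ?_
  · simpa using
      (((tendsto_pow_atTop_nhds_zero_of_lt_one ha0 ha1).div_const (1 - a)).mul_const ‖B‖).const_mul K
  · intro n m hnm
    have hle : ConeLe P (d (u n) (u m)) ((a ^ n / (1 - a)) • B) :=
      hP.le_trans (hd.dist_le_geom_sum hP hu hnm)
        (hP.smul_le_smul_of_le (geom_sum_Ico_le_of_lt_one ha0 ha1) hB)
    have hnonneg : ConeLe P 0 (d (u n) (u m)) := by simpa [ConeLe] using hd.dist_mem hP _ _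
    have hnorm := hK.2 _ _ hnonneg hle
    rwa [norm_smul, Real.norm_of_nonneg (by positivity)] at hnorm

lemma coneCauchy_of_zigzag (hd : IsConeMetric P d) (hP : IsCone P) {K : ℝ}
    (hK : IsNormalCone P K) {a : ℝ} (ha0 : 0 ≤ a) (ha1 : a < 1) {B₁ B₂ : E} (hB₁ : B₁ ∈ P)
    (hB₂ : B₂ ∈ P) {s t : ℕ → M} (hst : ∀ n, ConeLe P (d (s n) (t n)) (a ^ n • B₁))
    (hts : ∀ n, ConeLe P (d (t n) (s (n + 1))) (a ^ n • B₂)) :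
    ConeCauchy P d s :=
  hd.coneCauchy_of_dist_succ_le_geom hP hK ha0 ha1 (hP.add_mem hB₁ hB₂) fun n => by
    rw [smul_add]
    exact hP.le_trans (hd.triangle _ _ (t n)) (hP.add_le_add (hst n) (hts n))

end IsConeMetric

def IsTRContraction {E : Type*} [NormedAddCommGroup E] [NormedSpace ℝ E] (P : Set E)
    {M : Type*} (d : M → M → E) (T R S : M → M) (a : ℝ) : Prop :=
  ∀ x y : M, ConeLe P (d (T (S x)) (R (S y))) (a • d (T x) (R y))

lemma IsTRContraction.dist_iterate_le {E : Type*} [NormedAddCommGroup E] [NormedSpace ℝ E]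
    {P : Set E} {M : Type*} {d : M → M → E} {T R S : M → M} {a : ℝ}
    (hS : IsTRContraction P d T R S a) (hP : IsCone P) (ha0 : 0 ≤ a) (n : ℕ) (x y : M) :
    ConeLe P (d (T (S^[n] x)) (R (S^[n] y))) (a ^ n • d (T x) (R y)) := by
  induction n with
  | zero => simpa using hP.le_refl _
  | succ n ih =>
    rw [Function.iterate_succ_apply', Function.iterate_succ_apply', pow_succ', mul_smul]
    exact hP.le_trans (hS _ _) (hP.smul_le_smul ha0 ih)

theorem stmt1_general
    {E : Type*} [NormedAddCommGroup E] [NormedSpace ℝ E]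
    {M : Type*} (P : Set E) (hP : IsCone P)
    (K : ℝ) (hK : IsNormalCone P K)
    (d : M → M → E) (hd : IsConeMetric P d) (hM : ConeComplete P d)
    (T R : M → M)
    (S : M → M)
    (a : ℝ) (ha0 : 0 ≤ a) (ha1 : a < 1)
    (hS : ∀ x y : M, ConeLe P (d (T (S x)) (R (S y))) (a • d (T x) (R y)))
    (x₀ : M) :
    ∃ y₀ z₀ : M,
      ConeConverges P d (fun n => T (S^[n] x₀)) y₀ ∧
      ConeConverges P d (fun n => R (S^[n] x₀)) z₀ := by
  have hTR : IsTRContraction P d T R S a := hS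
  have hst (n : ℕ) : ConeLe P (d (T (S^[n] x₀)) (R (S^[n] x₀))) (a ^ n • d (T x₀) (R x₀)) :=
    hTR.dist_iterate_le hP ha0 n x₀ x₀
  have hts (n : ℕ) :
      ConeLe P (d (R (S^[n] x₀)) (T (S^[n + 1] x₀))) (a ^ n • d (T (S x₀)) (R x₀)) := by
    rw [hd.symm, Function.iterate_succ_apply]
    exact hTR.dist_iterate_le hP ha0 n (S x₀) x₀
  have hst_succ (n : ℕ) :
      ConeLe P (d (T (S^[n + 1] x₀)) (R (S^[n + 1] x₀))) (a ^ n • a • d (T x₀) (R x₀)) := by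
    simpa only [smul_smul, ← pow_succ] using hst (n + 1)
  have hB₁ := hd.dist_mem hP (T x₀) (R x₀)
  have hB₂ := hd.dist_mem hP (T (S x₀)) (R x₀)
  obtain ⟨y₀, hy₀⟩ := hM _ (hd.coneCauchy_of_zigzag hP hK ha0 ha1 hB₁ hB₂ hst hts)
  -- `t` is the even part of the zigzag `t₀, s₁, t₁, s₂, …`
  obtain ⟨z₀, hz₀⟩ := hM _ <|
    hd.coneCauchy_of_zigzag hP hK ha0 ha1 hB₂ (hP.smul_mem ha0 hB₁) hts hst_succ
  exact ⟨y₀, z₀, hy₀, hz₀⟩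

theorem stmt1
    {E : Type*} [NormedAddCommGroup E] [NormedSpace ℝ E] [CompleteSpace E]
    {M : Type*} (P : Set E) (hP : IsCone P) (hPint : (interior P).Nonempty)
    (K : ℝ) (hK : IsNormalCone P K)
    (d : M → M → E) (hd : IsConeMetric P d) (hM : ConeComplete P d)
    (T R : M → M) (hTinj : Function.Injective T) (hRinj : Function.Injective R)
    (hTc : ConeContinuousMap P d T) (hRc : ConeContinuousMap P d R)
    (S : M → M) (hSc : ConeContinuousMap P d S)
    (a : ℝ) (ha0 : 0 ≤ a) (ha1 : a < 1)
    (hS : ∀ x y : M, ConeLe P (d (T (S x)) (R (S y))) (a • d (T x) (R y)))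
    (x₀ : M) :
    ∃ y₀ z₀ : M,
      ConeConverges P d (fun n => T (S^[n] x₀)) y₀ ∧
      ConeConverges P d (fun n => R (S^[n] x₀)) z₀ :=
  stmt1_general P hP K hK d hd hM T R S a ha0 ha1 hS x₀
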